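/- Let T = S ∪ I be a finitely generated semigroup where I is a finite ideal of T and S is an infinite subsemigroup of T with S ∩ I = ∅. Then S has rational word problem if and only if T has rational word problem. -/

import Mathlib

/-! Since `I = Sᶜ` is an ideal, a product lies in `S` only if all its factors do. Over the
generators `B ∪ I` of `T`, the word problem therefore splits into pairs of words over `B`, decided
by the automaton for the word problem of `S`, and pairs of words with the same value in `I`. For
the latter, two deterministic automata with finitely many states suffice: while reading a word it
is enough to remember its value if this lies in the finite set `I`, and otherwise only the left
action of that value on `I`. Conversely, the word problem of `S` over `A ∩ S` is the restriction
of that of `T` over a generating set `A`, and `A ∩ S` generates `S` because `I` is an ideal. -/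

/-- An asynchronous two-tape finite state automaton: in each step it reads at
most one symbol from each tape. -/
structure AsyncFSA (A : Type*) (B : Type*) where
  Q : Type
  [fin : Finite Q]
  init : Q
  accept : Set Q
  trans : Q → Option A → Option B → Q → Prop

namespace AsyncFSA

variable {A B : Type*}

/-- Computations of an asynchronous automaton. -/
inductive Reaches (M : AsyncFSA A B) : M.Q → List A → List B → M.Q → Prop
  | refl (q : M.Q) : Reaches M q [] [] q
  | step {p q r : M.Q} {a : Option A} {b : Option B} {u : List A} {v : List B} :
      M.trans p a b q → Reaches M q u v r →
      Reaches M p (a.toList ++ u) (b.toList ++ v) r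

/-- Acceptance of a pair of strings. -/
def Accepts (M : AsyncFSA A B) (u : List A) (v : List B) : Prop :=
  ∃ q ∈ M.accept, M.Reaches M.init u v q

end AsyncFSA

/-- A relation on strings is rational if it is decided by an asynchronous
two-tape finite state automaton. -/
def IsRationalRel {A B : Type*} (R : Set (List A × List B)) : Prop :=
  ∃ M : AsyncFSA A B, ∀ p : List A × List B, p ∈ R ↔ M.Accepts p.1 p.2

/-- Pad a pair of strings to equal length, using `none` as padding symbol. -/
def padPair {A : Type*} (p : List A × List A) : List (Option A × Option A) :=
  List.zip (p.1.map some ++ List.replicate (p.2.length - p.1.length) none)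
           (p.2.map some ++ List.replicate (p.1.length - p.2.length) none)

/-- A relation on strings is regular if a synchronous two-tape finite state
automaton (a finite automaton over the padded pair alphabet) accepts a padded
pair exactly when the pair is in the relation. -/
def IsRegularRel {A : Type*} (R : Set (List A × List A)) : Prop :=
  ∃ (Q : Type) (_ : Fintype Q) (M : DFA (Option A × Option A) Q),
    ∀ p : List A × List A, p ∈ R ↔ padPair p ∈ M.accepts

/-- A language is regular if accepted by a finite state automaton. -/
def IsRegularLang {A : Type*} (L : Set (List A)) : Prop :=
  ∃ (Q : Type) (_ : Fintype Q) (M : DFA A Q), ∀ w, w ∈ L ↔ w ∈ M.accepts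

/-- Evaluation of a word in a semigroup (`none` for the empty word). -/
def evalWord {α : Type*} {S : Type*} [Semigroup S] (f : α → S) : List α → Option S
  | [] => none
  | a :: l => some (List.foldl (fun s x => s * f x) (f a) l)

/-- The semigroup word problem with respect to a set `A` of elements:
pairs of nonempty strings over `A` representing the same element. -/
def SWP {S : Type*} [Semigroup S] (A : Set S) : Set (List ↥A × List ↥A) :=
  {p | p.1 ≠ [] ∧ p.2 ≠ [] ∧
    evalWord Subtype.val p.1 = evalWord Subtype.val p.2}

/-- The monoid word problem with respect to a set `A` of elements. -/
def MWP {M : Type*} [Monoid M] (A : Set M) : Set (List ↥A × List ↥A) :=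
  {p | (p.1.map Subtype.val).prod = (p.2.map Subtype.val).prod}

/-- A semigroup has rational word problem if it has a finite generating set
with rational word problem. -/
def HasRationalWP (S : Type*) [Semigroup S] : Prop :=
  ∃ A : Set S, A.Finite ∧ Subsemigroup.closure A = ⊤ ∧ IsRationalRel (SWP A)

namespace AsyncFSA

variable {A B A' B' : Type*}

theorem Reaches.map_states {M N : AsyncFSA A B} (f : M.Q → N.Q)
    (hf : ∀ {p a b q}, M.trans p a b q → N.trans (f p) a b (f q))
    {p q : M.Q} {u : List A} {v : List B} (h : M.Reaches p u v q) :
    N.Reaches (f p) u v (f q) := by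
  induction h with
  | refl => exact .refl _
  | step ht _ ih => exact .step (hf ht) ih

theorem Reaches.exists_of_map_states {M N : AsyncFSA A B} (f : M.Q → N.Q)
    (hf : ∀ {p a b r}, N.trans (f p) a b r → ∃ q, r = f q ∧ M.trans p a b q)
    {p : M.Q} {r : N.Q} {u : List A} {v : List B} (h : N.Reaches (f p) u v r) :
    ∃ q, r = f q ∧ M.Reaches p u v q := by
  generalize hs : f p = s at h
  induction h generalizing p with
  | refl => exact ⟨p, hs.symm, .refl _⟩
  | step ht _ ih =>
    subst hs
    obtain ⟨q, rfl, hq⟩ := hf ht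
    obtain ⟨r, rfl, hr⟩ := ih rfl
    exact ⟨r, rfl, .step hq hr⟩

private theorem exists_toList_eq_of_map_eq_toList {α β : Type*} {f : α → β} {l : List α}
    {o : Option β} (h : l.map f = o.toList) : ∃ o' : Option α, l = o'.toList ∧ o'.map f = o := by
  cases o with
  | none => exact ⟨none, List.map_eq_nil_iff.1 h, rfl⟩
  | some y =>
    obtain ⟨x, rfl, rfl⟩ := List.map_eq_singleton_iff.1 h
    exact ⟨some x, rfl, rfl⟩

def comap (M : AsyncFSA A' B') (f : A → A') (g : B → B') : AsyncFSA A B where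
  Q := M.Q
  fin := M.fin
  init := M.init
  accept := M.accept
  trans p a b q := M.trans p (a.map f) (b.map g) q

theorem reaches_comap {M : AsyncFSA A' B'} {f : A → A'} {g : B → B'} {p q : (M.comap f g).Q}
    {u : List A} {v : List B} :
    (M.comap f g).Reaches p u v q ↔ M.Reaches p (u.map f) (v.map g) q := by
  constructor
  · intro h
    induction h with
    | refl => exact .refl _
    | step ht _ ih =>
      simpa only [List.map_append, Option.toList_map] using Reaches.step (M := M) ht ih
  · intro h
    generalize hu' : u.map f = u' at h
    generalize hv' : v.map g = v' at h
    induction h generalizing u v with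
    | refl =>
      obtain rfl := List.map_eq_nil_iff.1 hu'
      obtain rfl := List.map_eq_nil_iff.1 hv'
      exact .refl _
    | step ht _ ih =>
      obtain ⟨u₀, u₁, rfl, ha, rfl⟩ := List.map_eq_append_iff.1 hu'
      obtain ⟨v₀, v₁, rfl, hb, rfl⟩ := List.map_eq_append_iff.1 hv'
      obtain ⟨a, rfl, rfl⟩ := exists_toList_eq_of_map_eq_toList ha
      obtain ⟨b, rfl, rfl⟩ := exists_toList_eq_of_map_eq_toList hb
      exact .step ht (ih rfl rfl)

theorem accepts_comap {M : AsyncFSA A' B'} {f : A → A'} {g : B → B'} {u : List A}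
    {v : List B} : (M.comap f g).Accepts u v ↔ M.Accepts (u.map f) (v.map g) :=
  exists_congr fun _ => and_congr_right fun _ => reaches_comap

def map (M : AsyncFSA A B) (f : A → A') (g : B → B') : AsyncFSA A' B' where
  Q := M.Q
  fin := M.fin
  init := M.init
  accept := M.accept
  trans p a b q := ∃ a₀ b₀, a = a₀.map f ∧ b = b₀.map g ∧ M.trans p a₀ b₀ q

theorem reaches_map {M : AsyncFSA A B} {f : A → A'} {g : B → B'} {p q : (M.map f g).Q}
    {u : List A'} {v : List B'} :
    (M.map f g).Reaches p u v q ↔ ∃ u₀ v₀, u = u₀.map f ∧ v = v₀.map g ∧ M.Reaches p u₀ v₀ q := by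
  constructor
  · intro h
    induction h with
    | refl => exact ⟨[], [], rfl, rfl, .refl _⟩
    | step ht _ ih =>
      obtain ⟨a₀, b₀, rfl, rfl, ht⟩ := ht
      obtain ⟨u₀, v₀, rfl, rfl, h⟩ := ih
      exact ⟨a₀.toList ++ u₀, b₀.toList ++ v₀, by simp [Option.toList_map],
        by simp [Option.toList_map], .step ht h⟩
  · rintro ⟨u₀, v₀, rfl, rfl, h⟩
    induction h with
    | refl => exact .refl _
    | step ht _ ih =>
      simpa only [List.map_append, Option.toList_map] using
        Reaches.step (M := M.map f g) ⟨_, _, rfl, rfl, ht⟩ ih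

theorem accepts_map {M : AsyncFSA A B} {f : A → A'} {g : B → B'} {u : List A'} {v : List B'} :
    (M.map f g).Accepts u v ↔ ∃ u₀ v₀, u = u₀.map f ∧ v = v₀.map g ∧ M.Accepts u₀ v₀ := by
  simp only [Accepts, reaches_map]
  exact ⟨fun ⟨q, hq, u₀, v₀, hu, hv, h⟩ => ⟨u₀, v₀, hu, hv, q, hq, h⟩,
    fun ⟨u₀, v₀, hu, hv, q, hq, h⟩ => ⟨q, hq, u₀, v₀, hu, hv, h⟩⟩

def union (M₁ M₂ : AsyncFSA A B) : AsyncFSA A B where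
  Q := Option (M₁.Q ⊕ M₂.Q)
  fin := have := M₁.fin; have := M₂.fin; inferInstance
  init := none
  accept
    | some (.inl q) => q ∈ M₁.accept
    | some (.inr q) => q ∈ M₂.accept
    | none => False
  trans
    | none, a, b, some (.inl q) => a = none ∧ b = none ∧ q = M₁.init
    | none, a, b, some (.inr q) => a = none ∧ b = none ∧ q = M₂.init
    | some (.inl p), a, b, some (.inl q) => M₁.trans p a b q
    | some (.inr p), a, b, some (.inr q) => M₂.trans p a b q
    | _, _, _, _ => False

theorem accepts_union {M₁ M₂ : AsyncFSA A B} {u : List A} {v : List B} :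
    (M₁.union M₂).Accepts u v ↔ M₁.Accepts u v ∨ M₂.Accepts u v := by
  have inl_trans {p a b r} (h : (M₁.union M₂).trans (some (.inl p)) a b r) :
      ∃ q, r = some (.inl q) ∧ M₁.trans p a b q := by
    rcases r with _ | q | q <;> first | exact ⟨q, rfl, h⟩ | exact h.elim
  have inr_trans {p a b r} (h : (M₁.union M₂).trans (some (.inr p)) a b r) :
      ∃ q, r = some (.inr q) ∧ M₂.trans p a b q := by
    rcases r with _ | q | q <;> first | exact ⟨q, rfl, h⟩ | exact h.elim
  constructor
  · rintro ⟨r, hr, h⟩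
    cases h with
    | refl => exact hr.elim
    | @step _ q _ _ _ _ _ ht h =>
      rcases q with _ | q | q
      · exact ht.elim
      · obtain ⟨rfl, rfl, rfl⟩ := ht
        obtain ⟨q, rfl, hq⟩ := Reaches.exists_of_map_states (M := M₁) (N := M₁.union M₂)
          (some ∘ Sum.inl) inl_trans h
        exact .inl ⟨q, hr, hq⟩
      · obtain ⟨rfl, rfl, rfl⟩ := ht
        obtain ⟨q, rfl, hq⟩ := Reaches.exists_of_map_states (M := M₂) (N := M₁.union M₂)
          (some ∘ Sum.inr) inr_trans h
        exact .inr ⟨q, hr, hq⟩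
  · rintro (⟨q, hq, h⟩ | ⟨q, hq, h⟩)
    · exact ⟨some (.inl q), hq, .step (a := none) (b := none)
        (show (M₁.union M₂).trans none none none (some (.inl M₁.init)) from ⟨rfl, rfl, rfl⟩)
        (h.map_states (N := M₁.union M₂) (fun q => some (.inl q)) id)⟩
    · exact ⟨some (.inr q), hq, .step (a := none) (b := none)
        (show (M₁.union M₂).trans none none none (some (.inr M₂.init)) from ⟨rfl, rfl, rfl⟩)
        (h.map_states (N := M₁.union M₂) (fun q => some (.inr q)) id)⟩

def prodFoldl {Q₁ Q₂ : Type} [Finite Q₁] [Finite Q₂] (δ₁ : Q₁ → A → Q₁) (δ₂ : Q₂ → B → Q₂)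
    (q₁ : Q₁) (q₂ : Q₂) (F : Q₁ → Q₂ → Prop) : AsyncFSA A B where
  Q := Q₁ × Q₂
  init := (q₁, q₂)
  accept := {q | F q.1 q.2}
  trans p a b q := q = (a.toList.foldl δ₁ p.1, b.toList.foldl δ₂ p.2)

section prodFoldl

variable {Q₁ Q₂ : Type} [Finite Q₁] [Finite Q₂] {δ₁ : Q₁ → A → Q₁} {δ₂ : Q₂ → B → Q₂}
  {q₁ : Q₁} {q₂ : Q₂} {F : Q₁ → Q₂ → Prop}

theorem reaches_prodFoldl {p q : (prodFoldl δ₁ δ₂ q₁ q₂ F).Q} {u : List A} {v : List B} :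
    (prodFoldl δ₁ δ₂ q₁ q₂ F).Reaches p u v q ↔ q = (u.foldl δ₁ p.1, v.foldl δ₂ p.2) := by
  constructor
  · intro h
    induction h with
    | refl => rfl
    | step ht _ ih =>
      cases ht
      simpa only [List.foldl_append] using ih
  · rintro rfl
    induction u generalizing p with
    | nil =>
      induction v generalizing p with
      | nil => exact .refl _
      | cons y v ih => exact .step (a := none) (b := some y) rfl ih
    | cons x u ih => exact .step (a := some x) (b := none) rfl ih

theorem accepts_prodFoldl {u : List A} {v : List B} :
    (prodFoldl δ₁ δ₂ q₁ q₂ F).Accepts u v ↔ F (u.foldl δ₁ q₁) (v.foldl δ₂ q₂) := by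
  simp only [Accepts, reaches_prodFoldl]
  exact ⟨fun ⟨_, hq, h⟩ => by subst h; exact hq, fun h => ⟨_, h, rfl⟩⟩

end prodFoldl

end AsyncFSA

namespace IsRationalRel

variable {A B A' B' : Type*}

theorem union {R₁ R₂ : Set (List A × List B)} (h₁ : IsRationalRel R₁) (h₂ : IsRationalRel R₂) :
    IsRationalRel (R₁ ∪ R₂) := by
  obtain ⟨M₁, hM₁⟩ := h₁
  obtain ⟨M₂, hM₂⟩ := h₂
  exact ⟨M₁.union M₂, fun p => by rw [Set.mem_union, hM₁, hM₂, AsyncFSA.accepts_union]⟩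

theorem preimage_map {R : Set (List A' × List B')} (h : IsRationalRel R) (f : A → A')
    (g : B → B') : IsRationalRel (Prod.map (List.map f) (List.map g) ⁻¹' R) := by
  obtain ⟨M, hM⟩ := h
  exact ⟨M.comap f g, fun p => by rw [Set.mem_preimage, hM, AsyncFSA.accepts_comap]; rfl⟩

theorem image_map {R : Set (List A × List B)} (h : IsRationalRel R) (f : A → A')
    (g : B → B') : IsRationalRel (Prod.map (List.map f) (List.map g) '' R) := by
  obtain ⟨M, hM⟩ := h
  refine ⟨M.map f g, fun ⟨u, v⟩ => ?_⟩
  simp only [Set.mem_image, Prod.exists, Prod.map, Prod.mk.injEq, hM, AsyncFSA.accepts_map]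
  exact ⟨fun ⟨u₀, v₀, h, hu, hv⟩ => ⟨u₀, v₀, hu.symm, hv.symm, h⟩,
    fun ⟨u₀, v₀, hu, hv, h⟩ => ⟨u₀, v₀, h, hu.symm, hv.symm⟩⟩

end IsRationalRel

theorem isRationalRel_foldl {A B Q₁ Q₂ : Type*} [Finite Q₁] [Finite Q₂] (δ₁ : Q₁ → A → Q₁)
    (δ₂ : Q₂ → B → Q₂) (q₁ : Q₁) (q₂ : Q₂) (F : Q₁ → Q₂ → Prop) :
    IsRationalRel {p : List A × List B | F (p.1.foldl δ₁ q₁) (p.2.foldl δ₂ q₂)} := by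
  -- automata have their states in `Type`, so transport both state spaces to some `Fin n`
  obtain ⟨n₁, ⟨e₁⟩⟩ := Finite.exists_equiv_fin Q₁
  obtain ⟨n₂, ⟨e₂⟩⟩ := Finite.exists_equiv_fin Q₂
  refine ⟨.prodFoldl (fun q a => e₁ (δ₁ (e₁.symm q) a)) (fun q b => e₂ (δ₂ (e₂.symm q) b))
    (e₁ q₁) (e₂ q₂) (fun x y => F (e₁.symm x) (e₂.symm y)), fun ⟨u, v⟩ => ?_⟩
  rw [AsyncFSA.accepts_prodFoldl, List.foldl_hom e₁ (g₁ := δ₁) (by simp),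
    List.foldl_hom e₂ (g₁ := δ₂) (by simp)]
  simp only [Equiv.symm_apply_apply]; rfl

section evalWord

variable {α β S T : Type*} [Semigroup S] [Semigroup T]

theorem evalWord_map (g : β → S) (j : α → β) (u : List α) :
    evalWord g (u.map j) = evalWord (g ∘ j) u := by
  cases u <;> simp [evalWord, List.foldl_map]

theorem map_evalWord (φ : S →ₙ* T) (f : α → S) (u : List α) :
    (evalWord f u).map φ = evalWord (φ ∘ f) u := by
  cases u with
  | nil => rfl
  | cons a l =>
    simp only [evalWord, Option.map_some, Function.comp_apply, Option.some.injEq]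
    exact (List.foldl_hom φ fun x y => (map_mul φ x (f y)).symm).symm

theorem mem_SWP_iff {A : Set S} {u v : List A} :
    (u, v) ∈ SWP A ↔ ∃ s, evalWord Subtype.val u = some s ∧ evalWord Subtype.val v = some s := by
  cases u <;> cases v <;> simp [SWP, evalWord, eq_comm]

theorem mem_SWP_map_iff {A : Set S} {C : Set T} (φ : S →ₙ* T) (hφ : Function.Injective φ)
    (j : A → C) (hj : ∀ a, (j a : T) = φ a) {u v : List A} :
    (u.map j, v.map j) ∈ SWP C ↔ (u, v) ∈ SWP A := by
  have hval : Subtype.val ∘ j = φ ∘ Subtype.val := funext hj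
  simp only [SWP, Set.mem_ofPred_eq, ne_eq, List.map_eq_nil_iff, evalWord_map, hval,
    ← map_evalWord, (Option.map_injective hφ).eq_iff]

theorem foldl_eq_getD_evalWord {Q : Type*} (f : α → S) (φ : S → Q) (δ : Q → S → Q) (q₀ : Q)
    (hinit : ∀ s, δ q₀ s = φ s) (hmul : ∀ s t, δ (φ s) t = φ (s * t)) (w : List α) :
    w.foldl (fun q a => δ q (f a)) q₀ = ((evalWord f w).map φ).getD q₀ := by
  cases w with
  | nil => rfl
  | cons a l =>
    simp only [List.foldl_cons, hinit, evalWord, Option.map_some, Option.getD_some]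
    exact List.foldl_hom φ fun x y => hmul x (f y)

theorem mem_of_evalWord_mem {S : Subsemigroup T} (hS : ∀ x y : T, x * y ∈ S → x ∈ S ∧ y ∈ S)
    {f : α → T} {w : List α} {t : T} (hw : evalWord f w = some t) (ht : t ∈ S) :
    ∀ a ∈ w, f a ∈ S := by
  have key : ∀ (l : List α) (x : T), l.foldl (fun s y => s * f y) x ∈ S →
      x ∈ S ∧ ∀ a ∈ l, f a ∈ S := by
    intro l
    induction l with
    | nil => exact fun x hx => ⟨hx, by simp⟩
    | cons b l ih =>
      intro x hx
      obtain ⟨hxb, hl⟩ := ih _ hx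
      exact ⟨(hS _ _ hxb).1, List.forall_mem_cons.2 ⟨(hS _ _ hxb).2, hl⟩⟩
  cases w with
  | nil => cases hw
  | cons a l =>
    obtain rfl := Option.some.inj hw
    exact List.forall_mem_cons.2 (key l (f a) ht)

end evalWord

section complement

variable {T : Type*} [Semigroup T] {S : Subsemigroup T}

def complLeftMul (hS : ∀ x y : T, x * y ∈ S → x ∈ S ∧ y ∈ S) (t : T) (i : ↥(S : Set T)ᶜ) :
    ↥(S : Set T)ᶜ :=
  ⟨t * i, fun h => i.2 (hS _ _ h).2⟩

variable (S) in
/-- `.inl g` stands for a value in `S` acting on `Sᶜ` from the left by `g` (the empty word has state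
`.inl id`), and `.inr i` for the value `i ∈ Sᶜ`. -/
abbrev ComplState : Type _ := (↥(S : Set T)ᶜ → ↥(S : Set T)ᶜ) ⊕ ↥(S : Set T)ᶜ

open Classical in
noncomputable def toComplState (hS : ∀ x y : T, x * y ∈ S → x ∈ S ∧ y ∈ S) (t : T) :
    ComplState S :=
  if h : t ∈ S then .inl (complLeftMul hS t) else .inr ⟨t, h⟩

open Classical in
noncomputable def ComplState.step (hS : ∀ x y : T, x * y ∈ S → x ∈ S ∧ y ∈ S) :
    ComplState S → T → ComplState S
  | .inl g, a => if h : a ∈ S then .inl (g ∘ complLeftMul hS a) else .inr (g ⟨a, h⟩)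
  | .inr i, a => .inr ⟨i * a, fun h => i.2 (hS _ _ h).1⟩

namespace ComplState

variable (hS : ∀ x y : T, x * y ∈ S → x ∈ S ∧ y ∈ S)

theorem step_inl_id (a : T) : step hS (.inl id) a = toComplState hS a := by
  simp only [step, toComplState, Function.id_comp, id]

theorem step_toComplState (t a : T) :
    step hS (toComplState hS t) a = toComplState hS (t * a) := by
  by_cases ht : t ∈ S
  · by_cases ha : a ∈ S
    · simp only [toComplState, step, ht, ha, mul_mem ht ha, dite_true]
      congr 1
      funext i
      exact Subtype.ext (mul_assoc t a i).symm
    · have hta : t * a ∉ S := fun h => ha (hS _ _ h).2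
      simp only [toComplState, step, ht, ha, hta, dite_true, dite_false]
      rfl
  · have hta : t * a ∉ S := fun h => ht (hS _ _ h).1
    simp only [toComplState, step, ht, hta, dite_false]

theorem eq_of_toComplState_eq_inr {t : T} {i : ↥(S : Set T)ᶜ}
    (h : toComplState hS t = .inr i) : t = i := by
  unfold toComplState at h
  split_ifs at h
  exact congrArg Subtype.val (Sum.inr_injective h)

theorem foldl_step {C : Set T} (w : List C) :
    w.foldl (fun q c => step hS q c.1) (.inl id) =
      ((evalWord Subtype.val w).map (toComplState hS)).getD (.inl id) :=
  foldl_eq_getD_evalWord _ _ _ _ (step_inl_id hS) (step_toComplState hS) w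

end ComplState

theorem closure_image_val_union_compl {B : Set S} (hB : Subsemigroup.closure B = ⊤) :
    Subsemigroup.closure (Subtype.val '' B ∪ (S : Set T)ᶜ) = ⊤ := by
  refine eq_top_iff.2 fun t _ => ?_
  by_cases ht : t ∈ S
  · have : t ∈ (Subsemigroup.closure B).map (MulMemClass.subtype S) := by
      rw [hB]
      exact ⟨⟨t, ht⟩, Subsemigroup.mem_top _, rfl⟩
    rw [MulHom.map_mclosure] at this
    exact Subsemigroup.closure_mono Set.subset_union_left this
  · exact Subsemigroup.subset_closure (.inr ht)

theorem closure_preimage_val_eq_top (hS : ∀ x y : T, x * y ∈ S → x ∈ S ∧ y ∈ S) {A : Set T}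
    (hA : Subsemigroup.closure A = ⊤) :
    Subsemigroup.closure (Subtype.val ⁻¹' A : Set S) = ⊤ := by
  suffices ∀ t ∈ Subsemigroup.closure A, ∀ h : t ∈ S,
      (⟨t, h⟩ : S) ∈ Subsemigroup.closure (Subtype.val ⁻¹' A) from
    eq_top_iff.2 fun s _ => this s (hA ▸ Subsemigroup.mem_top _) s.2
  intro t ht
  induction ht using Subsemigroup.closure_induction with
  | mem a ha => exact fun _ => Subsemigroup.subset_closure ha
  | mul x y _ _ hx hy => exact fun h => mul_mem (hx (hS _ _ h).1) (hy (hS _ _ h).2)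

theorem SWP_eq_image_union (hS : ∀ x y : T, x * y ∈ S → x ∈ S ∧ y ∈ S) {B : Set S} {C : Set T}
    (ι : B → C) (hι : ∀ b, (ι b : T) = b) (hC : ∀ c : C, (c : T) ∈ S → c ∈ Set.range ι) :
    SWP C = Prod.map (List.map ι) (List.map ι) '' SWP B ∪
      {p | ∃ i, p.1.foldl (fun q c => ComplState.step hS q c.1) (.inl id) = .inr i ∧
        p.2.foldl (fun q c => ComplState.step hS q c.1) (.inl id) = .inr i} := by
  have mem_SWP_map_ι {u v : List B} : (u.map ι, v.map ι) ∈ SWP C ↔ (u, v) ∈ SWP B :=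
    mem_SWP_map_iff (MulMemClass.subtype S) Subtype.val_injective ι hι
  have mem_range_map_ι {w : List C} {t : T} (hw : evalWord Subtype.val w = some t) (ht : t ∈ S) :
      w ∈ Set.range (List.map ι) :=
    Set.range_list_map ι ▸ fun c hc => hC c (mem_of_evalWord_mem hS hw ht c hc)
  have evalWord_of_getD_eq_inr {w : List C} {i : ↥(S : Set T)ᶜ}
      (hw : ((evalWord Subtype.val w).map (toComplState hS)).getD (.inl id) = .inr i) :
      evalWord Subtype.val w = some i.1 := by
    cases h : evalWord Subtype.val w with
    | none => simp [h] at hw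
    | some t =>
      simp only [h, Option.map_some, Option.getD_some] at hw
      rw [ComplState.eq_of_toComplState_eq_inr hS hw]
  ext ⟨u, v⟩
  simp only [Set.mem_union, Set.mem_image, Set.mem_ofPred_eq, ComplState.foldl_step]
  constructor
  · intro h
    obtain ⟨t, hu, hv⟩ := mem_SWP_iff.1 h
    by_cases ht : t ∈ S
    · obtain ⟨u₀, rfl⟩ := mem_range_map_ι hu ht
      obtain ⟨v₀, rfl⟩ := mem_range_map_ι hv ht
      exact .inl ⟨(u₀, v₀), mem_SWP_map_ι.1 h, rfl⟩
    · refine .inr ⟨⟨t, ht⟩, ?_, ?_⟩ <;> simp [hu, hv, toComplState, ht]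
  · rintro (⟨⟨u₀, v₀⟩, h, he⟩ | ⟨i, hu, hv⟩)
    · obtain ⟨rfl, rfl⟩ := Prod.mk.inj he
      exact mem_SWP_map_ι.2 h
    · exact mem_SWP_iff.2 ⟨i, evalWord_of_getD_eq_inr hu, evalWord_of_getD_eq_inr hv⟩

theorem HasRationalWP.of_subsemigroup (hS : ∀ x y : T, x * y ∈ S → x ∈ S ∧ y ∈ S)
    (hfin : (S : Set T)ᶜ.Finite) (h : HasRationalWP S) : HasRationalWP T := by
  obtain ⟨B, hBfin, hB, hBrat⟩ := h
  have := hfin.to_subtype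
  let ι : B → ↥(Subtype.val '' B ∪ (S : Set T)ᶜ) := fun b => ⟨b, .inl ⟨b, b.2, rfl⟩⟩
  refine ⟨_, (hBfin.image _).union hfin, closure_image_val_union_compl hB, ?_⟩
  rw [SWP_eq_image_union hS ι (fun _ => rfl)]
  · exact (hBrat.image_map ι ι).union
      (isRationalRel_foldl _ _ _ _ fun q q' : ComplState S => ∃ i, q = .inr i ∧ q' = .inr i)
  · rintro ⟨c, ⟨b, hb, rfl⟩ | hc⟩ hcS
    · exact ⟨⟨b, hb⟩, rfl⟩
    · exact absurd hcS hc

theorem HasRationalWP.subsemigroup (hS : ∀ x y : T, x * y ∈ S → x ∈ S ∧ y ∈ S)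
    (h : HasRationalWP T) : HasRationalWP S := by
  obtain ⟨A, hAfin, hA, hArat⟩ := h
  let j : ↥(Subtype.val ⁻¹' A : Set S) → A := fun a => ⟨a.1, a.2⟩
  refine ⟨_, hAfin.preimage Subtype.val_injective.injOn, closure_preimage_val_eq_top hS hA, ?_⟩
  have : SWP (Subtype.val ⁻¹' A : Set S) = Prod.map (List.map j) (List.map j) ⁻¹' SWP A := by
    ext ⟨u, v⟩
    exact (mem_SWP_map_iff (MulMemClass.subtype S) Subtype.val_injective j fun _ => rfl).symm
  rw [this]
  exact hArat.preimage_map j j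

end complement

theorem stmt_17_general {T : Type*} [Semigroup T]
    (S' : Subsemigroup T) (I : Set T) (hI : I.Finite)
    (hideal : ∀ t : T, ∀ i ∈ I, t * i ∈ I ∧ i * t ∈ I)
    (hdisj : (S' : Set T) ∩ I = ∅)
    (hunion : (S' : Set T) ∪ I = Set.univ) :
    HasRationalWP ↥S' ↔ HasRationalWP T := by
  obtain rfl : I = (S' : Set T)ᶜ :=
    (IsCompl.compl_eq ⟨Set.disjoint_iff_inter_eq_empty.2 hdisj,
      codisjoint_iff.2 hunion⟩).symm
  have hS : ∀ x y : T, x * y ∈ S' → x ∈ S' ∧ y ∈ S' := fun x y hxy =>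
    ⟨not_not.1 fun hx => (hideal y x hx).2 hxy, not_not.1 fun hy => (hideal x y hy).1 hxy⟩
  exact ⟨.of_subsemigroup hS hI, .subsemigroup hS⟩

/-- For a finitely generated semigroup `T` that is the disjoint union of an
infinite subsemigroup `S'` and a finite ideal `I`, `S'` has rational word
problem iff `T` does. -/
theorem stmt_17 {T : Type*} [Semigroup T]
    (hfg : ∃ A : Set T, A.Finite ∧ Subsemigroup.closure A = ⊤)
    (S' : Subsemigroup T) (I : Set T) (hI : I.Finite)
    (hideal : ∀ t : T, ∀ i ∈ I, t * i ∈ I ∧ i * t ∈ I)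
    (hinf : (S' : Set T).Infinite)
    (hdisj : (S' : Set T) ∩ I = ∅)
    (hunion : (S' : Set T) ∪ I = Set.univ) :
    HasRationalWP ↥S' ↔ HasRationalWP T :=
  stmt_17_general S' I hI hideal hdisj hunion
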